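/- Let E be a locally convex space. A subset A of E is c^∞-closed (closed in the Mackey-closure topology) if and only if for every sequence (x_n) of points of A that Mackey-converges to some x ∈ E, the limit x belongs to A. -/

import Mathlib

open Filter Topology Set Bornology Pointwise

universe u v

/-- Gâteaux derivative of `Φ` at `x` in direction `v`, with value `w`. -/
def HasGDerivAt {E : Type u} {F : Type v} [AddCommGroup E] [Module ℝ E]
    [AddCommGroup F] [Module ℝ F] [TopologicalSpace F]
    (Φ : E → F) (x v : E) (w : F) : Prop :=
  Tendsto (fun t : ℝ => t⁻¹ • (Φ (x + t • v) - Φ x)) (𝓝[≠] (0 : ℝ)) (𝓝 w)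

/-- Derivative of a curve `c : ℝ → E` at `t`, with value `v`. -/
def CurveDerivAt {E : Type u} [AddCommGroup E] [Module ℝ E] [TopologicalSpace E]
    (c : ℝ → E) (v : E) (t : ℝ) : Prop :=
  Tendsto (fun h : ℝ => h⁻¹ • (c (t + h) - c t)) (𝓝[≠] (0 : ℝ)) (𝓝 v)

/-- The curve `c` is of class `C^k`: derivatives up to order `k` exist and are continuous. -/
def IsCkCurve {E : Type u} [AddCommGroup E] [Module ℝ E] [TopologicalSpace E]
    (k : ℕ) (c : ℝ → E) : Prop :=
  ∃ D : ℕ → ℝ → E, D 0 = c ∧ (∀ n < k, ∀ t, CurveDerivAt (D n) (D (n + 1) t) t) ∧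
    ∀ n ≤ k, Continuous (D n)

/-- The curve `c` is smooth (`C^∞`): all iterated derivatives exist and are continuous. -/
def IsSmoothCurve {E : Type u} [AddCommGroup E] [Module ℝ E] [TopologicalSpace E]
    (c : ℝ → E) : Prop :=
  ∃ D : ℕ → ℝ → E, D 0 = c ∧ (∀ n, ∀ t, CurveDerivAt (D n) (D (n + 1) t) t) ∧
    ∀ n, Continuous (D n)

/-- The set of difference quotients of `c` over `J`. -/
def DiffQuotients {E : Type u} [AddCommGroup E] [Module ℝ E]
    (c : ℝ → E) (J : Set ℝ) : Set E :=
  {x | ∃ t₁ ∈ J, ∃ t₂ ∈ J, t₁ ≠ t₂ ∧ x = (t₂ - t₁)⁻¹ • (c t₂ - c t₁)}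

/-- `c` is Lipschitz on `J`: its set of difference quotients over `J` is bounded. -/
def LipschitzOnSet {E : Type u} [AddCommGroup E] [Module ℝ E] [TopologicalSpace E]
    (c : ℝ → E) (J : Set ℝ) : Prop :=
  IsVonNBounded ℝ (DiffQuotients c J)

/-- `c` is locally Lipschitz: every real has a neighborhood on which `c` is Lipschitz. -/
def LocallyLipschitzCurve {E : Type u} [AddCommGroup E] [Module ℝ E] [TopologicalSpace E]
    (c : ℝ → E) : Prop :=
  ∀ t : ℝ, ∃ J ∈ 𝓝 t, LipschitzOnSet c J

/-- `c` is of class `Lip^k`: derivatives up to order `k` exist and the `k`-th one is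
locally Lipschitz. -/
def IsLipkCurve {E : Type u} [AddCommGroup E] [Module ℝ E] [TopologicalSpace E]
    (k : ℕ) (c : ℝ → E) : Prop :=
  ∃ D : ℕ → ℝ → E, D 0 = c ∧ (∀ n < k, ∀ t, CurveDerivAt (D n) (D (n + 1) t) t) ∧
    LocallyLipschitzCurve (D k)

/-- A set is absolutely convex if it is convex and balanced. -/
def AbsolutelyConvex {E : Type u} [AddCommGroup E] [Module ℝ E] (B : Set E) : Prop :=
  Convex ℝ B ∧ Balanced ℝ B

/-- A sequence `x` Mackey-converges to `l`. -/
def MackeyConvSeq {E : Type u} [AddCommGroup E] [Module ℝ E] [TopologicalSpace E]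
    (x : ℕ → E) (l : E) : Prop :=
  ∃ B : Set E, AbsolutelyConvex B ∧ IsVonNBounded ℝ B ∧
    ∃ μ : ℕ → ℝ, Tendsto μ atTop (𝓝 (0 : ℝ)) ∧ ∀ n, x n - l ∈ μ n • B

/-- `E` is Mackey-complete: every Mackey-Cauchy net converges. -/
def MackeyComplete (E : Type u) [AddCommGroup E] [Module ℝ E] [TopologicalSpace E] : Prop :=
  ∀ (ι : Type) [Nonempty ι] [SemilatticeSup ι] (x : ι → E),
    (∃ B : Set E, AbsolutelyConvex B ∧ IsVonNBounded ℝ B ∧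
      ∃ μ : ι × ι → ℝ, Tendsto μ atTop (𝓝 (0 : ℝ)) ∧ ∀ i j, x i - x j ∈ μ (i, j) • B) →
    ∃ l, Tendsto x atTop (𝓝 l)

/-- The Mackey-closure (`c^∞`) topology: the finest topology on `E` making all smooth
curves `ℝ → E` continuous. -/
def cInfTopology (E : Type u) [AddCommGroup E] [Module ℝ E] [TopologicalSpace E] :
    TopologicalSpace E :=
  ⨆ c : {c : ℝ → E // IsSmoothCurve c}, TopologicalSpace.coinduced c.1 inferInstance

/-- `Φ` is conveniently smooth on `U`: it sends smooth curves into `U` to smooth curves. -/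
def ConvSmoothOn {E : Type u} {F : Type v} [AddCommGroup E] [Module ℝ E] [TopologicalSpace E]
    [AddCommGroup F] [Module ℝ F] [TopologicalSpace F]
    (Φ : E → F) (U : Set E) : Prop :=
  ∀ c : ℝ → E, IsSmoothCurve c → (∀ t, c t ∈ U) → IsSmoothCurve (Φ ∘ c)

/-- Bastiani `C^k` maps: `C^0` means continuous on `U`; `C^{k+1}` means the Gâteaux
differential exists on `U × E` and is `C^k` there. -/
def IsCBastOn (F : Type v) [AddCommGroup F] [Module ℝ F] [TopologicalSpace F] :
    (k : ℕ) → (E : Type u) → [AddCommGroup E] → [Module ℝ E] → [TopologicalSpace E] →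
      (E → F) → Set E → Prop
  | 0, _, _, _, _, Φ, U => ContinuousOn Φ U
  | k + 1, E, iA, iM, iT, Φ, U =>
      letI : AddCommGroup E := iA
      letI : Module ℝ E := iM
      letI : TopologicalSpace E := iT
      ∃ D : E × E → F, (∀ x ∈ U, ∀ v, HasGDerivAt Φ x v (D (x, v))) ∧
        IsCBastOn F k (E × E) D (U ×ˢ (Set.univ : Set E))

/-- `Φ` is smooth on `U` in the sense of Bastiani. -/
def BastSmoothOn {E : Type u} {F : Type v} [AddCommGroup E] [Module ℝ E] [TopologicalSpace E]
    [AddCommGroup F] [Module ℝ F] [TopologicalSpace F]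
    (Φ : E → F) (U : Set E) : Prop :=
  ∀ k : ℕ, IsCBastOn F k E Φ U

/-- The absolutely convex hull of the closure of `A`. -/
def absConvexHullOfClosure {E : Type u} [AddCommGroup E] [Module ℝ E] [TopologicalSpace E]
    (A : Set E) : Set E :=
  ⋂₀ {t | closure A ⊆ t ∧ AbsolutelyConvex t}


/-!
If `c` is smooth and `tₙ → t`, Hahn–Banach and the scalar mean value theorem put the difference
quotients of `c` into the closed absolutely convex hull of the compact set `c' '' [t - r, t + r]`,
so `c (tₙ) → c t` Mackey; thus the sequential condition makes every `c ⁻¹' A` sequentially closed.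
Conversely, if `yₙ → x` Mackey, pass to a subsequence with `y (ρ j) - x ∈ 2^{-j²} • B` and glue
these points along bumps with disjoint supports near `2⁻ʲ`: the special curve
`c t = x + ∑ j, φ (2ʲ t - 1) • (y (ρ j) - x)` is smooth also at `0`, because the decay `2^{-j²}`
beats the growth `2^{jk}` of the `k`-th derivatives of the bumps. Then `x = c 0` lies in the
closed set `c ⁻¹' A`, which contains the points `2⁻ʲ → 0`.
-/

section Curves

variable {E : Type*} [AddCommGroup E] [Module ℝ E] [TopologicalSpace E]
  {c f : ℝ → E} {v : E} {t : ℝ}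

theorem isClosed_cInfTopology_iff (A : Set E) :
    IsClosed[cInfTopology E] A ↔ ∀ c : ℝ → E, IsSmoothCurve c → IsClosed (c ⁻¹' A) := by
  rw [cInfTopology, isClosed_iSup_iff]
  simp only [isClosed_coinduced, Subtype.forall]

theorem CurveDerivAt.congr_of_eventuallyEq (hc : CurveDerivAt c v t) (h : f =ᶠ[𝓝 t] c) :
    CurveDerivAt f v t := by
  have hshift : ∀ᶠ s in 𝓝 (0 : ℝ), f (t + s) = c (t + s) :=
    (continuous_const_add t).tendsto' 0 t (add_zero t) |>.eventually h
  refine hc.congr' (eventually_nhdsWithin_of_eventually_nhds (hshift.mono fun s hs => ?_))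
  simp only [hs, h.self_of_nhds]

theorem CurveDerivAt.const_add (hc : CurveDerivAt c v t) (x : E) :
    CurveDerivAt (fun s => x + c s) v t := by
  simpa only [CurveDerivAt, add_sub_add_left_eq_sub] using hc

theorem CurveDerivAt.hasDerivAt_clm (hc : CurveDerivAt c v t) (ℓ : E →L[ℝ] ℝ) :
    HasDerivAt (fun s => ℓ (c s)) (ℓ v) t := by
  rw [hasDerivAt_iff_tendsto_slope_zero]
  refine ((ℓ.continuous.tendsto v).comp hc).congr fun s => ?_
  simp [map_sub]

theorem curveDerivAt_zero_of_eventually_mem_smul_sq {B : Set E} (hB : IsVonNBounded ℝ B) {C : ℝ}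
    (hf : ∀ᶠ t in 𝓝 0, f t ∈ (C * t ^ 2) • B) : CurveDerivAt f 0 0 := by
  have hf0 : f 0 = 0 := by simpa using zero_smul_set_subset B (by simpa using hf.self_of_nhds)
  have hε : Tendsto (fun h : ℝ => C * h) (𝓝[≠] 0) (𝓝 0) :=
    ((continuous_const_mul C).tendsto' 0 0 (mul_zero C)).mono_left nhdsWithin_le_nhds
  refine (hB.tendsto_smallSets_nhds.comp hε).of_smallSets ?_
  filter_upwards [self_mem_nhdsWithin, nhdsWithin_le_nhds hf] with h hh hfh
  have : h⁻¹ • (C * h ^ 2) • B = (C * h) • B := by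
    rw [smul_smul]; congr 1; field_simp
  simpa [hf0, ← this] using smul_mem_smul_set hfh

theorem IsSmoothCurve.const_add [ContinuousAdd E] (hc : IsSmoothCurve c) (x : E) :
    IsSmoothCurve (fun s => x + c s) := by
  obtain ⟨D, rfl, hD, hDc⟩ := hc
  refine ⟨fun n s => (if n = 0 then x else 0) + D n s, by simp, fun n s => ?_,
    fun n => continuous_const.add (hDc n)⟩
  simpa using (hD n s).const_add (if n = 0 then x else 0)

variable [ContinuousSMul ℝ E]

theorem HasDerivAt.curveDerivAt_smul_const {g : ℝ → ℝ} {g' : ℝ} (hg : HasDerivAt g g' t) (v : E) :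
    CurveDerivAt (fun s => g s • v) (g' • v) t := by
  refine (hg.tendsto_slope_zero.smul_const v).congr fun s => ?_
  rw [smul_eq_mul, mul_smul, sub_smul]

variable [IsTopologicalAddGroup E]

theorem CurveDerivAt.continuousAt (hc : CurveDerivAt c v t) : ContinuousAt c t := by
  have hlim : Tendsto (fun h : ℝ => h • (h⁻¹ • (c (t + h) - c t))) (𝓝[≠] 0) (𝓝 0) := by
    simpa using (tendsto_id.mono_left nhdsWithin_le_nhds).smul hc
  have hshift : ContinuousAt (fun h => c (t + h)) 0 := by
    rw [← continuousWithinAt_compl_self, ContinuousWithinAt, add_zero]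
    refine (tendsto_sub_nhds_zero_iff.1 (hlim.congr' ?_))
    filter_upwards [self_mem_nhdsWithin] with h hh
    rw [smul_inv_smul₀ hh]
  convert hshift.comp_of_eq (continuous_sub_right t).continuousAt (sub_self t) using 1
  funext s
  simp

theorem IsSmoothCurve.of_curveDerivAt {D : ℕ → ℝ → E}
    (hD : ∀ n t, CurveDerivAt (D n) (D (n + 1) t) t) : IsSmoothCurve (D 0) :=
  ⟨D, rfl, hD, fun n => continuous_iff_continuousAt.2 fun t => (hD n t).continuousAt⟩

end Curves

section MeanValue

variable {E : Type*} [AddCommGroup E] [Module ℝ E] [TopologicalSpace E]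
  [IsTopologicalAddGroup E] [ContinuousSMul ℝ E] [LocallyConvexSpace ℝ E]
  {c c' : ℝ → E} {S : Set E}

theorem sub_mem_smul_of_curveDerivAt_mem (hS : Convex ℝ S) (hSc : IsClosed S) {a b : ℝ}
    (hab : a < b) (hc : ContinuousOn c (Icc a b)) (hd : ∀ s ∈ Ioo a b, CurveDerivAt c (c' s) s)
    (hc' : ∀ s ∈ Ioo a b, c' s ∈ S) : c b - c a ∈ (b - a) • S := by
  rw [mem_smul_set_iff_inv_smul_mem₀ (sub_ne_zero.2 hab.ne')]
  by_contra hq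
  obtain ⟨ℓ, r, hℓS, hℓq⟩ := geometric_hahn_banach_closed_point hS hSc hq
  obtain ⟨ξ, hξ, hslope⟩ := exists_hasDerivAt_eq_slope (fun s => ℓ (c s)) (fun s => ℓ (c' s))
    hab (ℓ.continuous.comp_continuousOn hc) fun s hs => (hd s hs).hasDerivAt_clm ℓ
  have : ℓ ((b - a)⁻¹ • (c b - c a)) = ℓ (c' ξ) := by
    rw [map_smul, map_sub, hslope, smul_eq_mul, div_eq_inv_mul]
  linarith [hℓS _ (hc' ξ hξ)]

theorem sub_mem_smul_of_forall_curveDerivAt (hS : Convex ℝ S) (hSc : IsClosed S)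
    (hd : ∀ s, CurveDerivAt c (c' s) s) {t₁ t₂ : ℝ} (hc' : ∀ s ∈ uIcc t₁ t₂, c' s ∈ S) :
    c t₂ - c t₁ ∈ (t₂ - t₁) • S := by
  have hc : Continuous c := continuous_iff_continuousAt.2 fun s => (hd s).continuousAt
  rcases lt_trichotomy t₁ t₂ with h | rfl | h
  · exact sub_mem_smul_of_curveDerivAt_mem hS hSc h hc.continuousOn (fun s _ => hd s)
      fun s hs => hc' s (Icc_subset_uIcc (Ioo_subset_Icc_self hs))
  · rw [sub_self, sub_self, zero_smul_set ⟨_, hc' t₁ left_mem_uIcc⟩]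
    rfl
  · have := sub_mem_smul_of_curveDerivAt_mem hS hSc h hc.continuousOn (fun s _ => hd s)
      fun s hs => hc' s (Icc_subset_uIcc' (Ioo_subset_Icc_self hs))
    rwa [← neg_sub t₁ t₂, neg_smul_set, ← neg_sub (c t₁), Set.neg_mem_neg]

end MeanValue

section Mackey

variable {E : Type*} [AddCommGroup E] [Module ℝ E] [TopologicalSpace E]
  [IsTopologicalAddGroup E] [ContinuousSMul ℝ E] [LocallyConvexSpace ℝ E]

theorem IsCompact.isVonNBounded_closedAbsConvexHull {K : Set E} (hK : IsCompact K) :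
    IsVonNBounded ℝ (closedAbsConvexHull ℝ K) := by
  let := IsTopologicalAddGroup.rightUniformSpace E
  have := isUniformAddGroup_of_addCommGroup (G := E)
  rw [closedAbsConvexHull_eq_closure_absConvexHull]
  exact hK.totallyBounded.absConvexHull.closure.isVonNBounded ℝ

theorem mackeyConvSeq_comp_of_curveDerivAt {c c' : ℝ → E} (hc' : Continuous c')
    (hd : ∀ s, CurveDerivAt c (c' s) s) {u : ℕ → ℝ} {t : ℝ} (hu : Tendsto u atTop (𝓝 t)) :
    MackeyConvSeq (fun n => c (u n)) (c t) := by
  obtain ⟨r, hr⟩ := (Metric.isBounded_range_of_tendsto u hu).subset_closedBall t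
  have hu_mem n : u n ∈ Icc (t - r) (t + r) := Real.closedBall_eq_Icc ▸ hr (mem_range_self n)
  have ht_mem : t ∈ Icc (t - r) (t + r) := by
    have hr0 : 0 ≤ r := dist_nonneg.trans (hr (mem_range_self 0))
    constructor <;> linarith
  set B := closedAbsConvexHull ℝ (c' '' Icc (t - r) (t + r))
  have hB : AbsConvex ℝ B := absConvex_convexClosedHull
  refine ⟨B, ⟨hB.2, hB.1⟩, (isCompact_Icc.image hc').isVonNBounded_closedAbsConvexHull,
    fun n => u n - t, by simpa using hu.sub_const t, fun n => ?_⟩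
  refine sub_mem_smul_of_forall_curveDerivAt hB.2 isClosed_closedAbsConvexHull hd fun s hs => ?_
  exact subset_closedAbsConvexHull (mem_image_of_mem c' (uIcc_subset_Icc ht_mem (hu_mem n) hs))

theorem IsSmoothCurve.mackeyConvSeq_comp {c : ℝ → E} (hc : IsSmoothCurve c) {u : ℕ → ℝ} {t : ℝ}
    (hu : Tendsto u atTop (𝓝 t)) : MackeyConvSeq (fun n => c (u n)) (c t) := by
  obtain ⟨D, rfl, hD, hDc⟩ := hc
  exact mackeyConvSeq_comp_of_curveDerivAt (hDc 1) (hD 0) hu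

end Mackey

noncomputable def bump : ℝ → ℝ := (⟨1/10, 1/5, by norm_num, by norm_num⟩ : ContDiffBump (0 : ℝ))

theorem bump_zero : bump 0 = 1 :=
  ContDiffBump.one_of_mem_closedBall _ (by norm_num)

theorem contDiff_bump {n : ℕ∞} : ContDiff ℝ n bump :=
  ContDiffBump.contDiff _

theorem tsupport_iteratedDeriv_bump_subset (k : ℕ) :
    tsupport (iteratedDeriv k bump) ⊆ Metric.closedBall 0 (1/5) := by
  induction k with
  | zero => exact (ContDiffBump.tsupport_eq _).subset
  | succ k ih => rw [iteratedDeriv_succ]; exact (tsupport_deriv_subset (𝕜 := ℝ)).trans ih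

theorem iteratedDeriv_bump_eq_zero (k : ℕ) {u : ℝ} (hu : 1/4 ≤ |u|) :
    iteratedDeriv k bump u = 0 :=
  image_eq_zero_of_notMem_tsupport fun h => by
    have := tsupport_iteratedDeriv_bump_subset k h
    rw [Metric.mem_closedBall, Real.dist_0_eq_abs] at this
    linarith

theorem continuous_iteratedDeriv_bump (k : ℕ) : Continuous (iteratedDeriv k bump) :=
  contDiff_bump.continuous_iteratedDeriv k (by exact_mod_cast le_top)

theorem hasDerivAt_iteratedDeriv_bump (k : ℕ) (u : ℝ) :
    HasDerivAt (iteratedDeriv k bump) (iteratedDeriv (k + 1) bump u) u := by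
  rw [iteratedDeriv_succ]
  exact ((contDiff_bump (n := ⊤)).differentiable_iteratedDeriv (n := ((⊤ : ℕ∞) : WithTop ℕ∞)) k
    (by exact_mod_cast ENat.natCast_lt_top k)).differentiableAt.hasDerivAt

theorem exists_abs_iteratedDeriv_bump_le (k : ℕ) : ∃ M, ∀ u, |iteratedDeriv k bump u| ≤ M :=
  (continuous_iteratedDeriv_bump k).bounded_above_of_compact_support <|
    isCompact_closedBall 0 (1/5) |>.of_isClosed_subset (isClosed_tsupport _)
      (tsupport_iteratedDeriv_bump_subset k)

noncomputable def scaledBumpDeriv (k j : ℕ) (s : ℝ) : ℝ :=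
  (2 ^ j) ^ k * iteratedDeriv k bump (2 ^ j * s - 1)

theorem hasDerivAt_scaledBumpDeriv (k j : ℕ) (t : ℝ) :
    HasDerivAt (scaledBumpDeriv k j) (scaledBumpDeriv (k + 1) j t) t := by
  have hin : HasDerivAt (fun s : ℝ => 2 ^ j * s - 1) (2 ^ j) t := by
    simpa using ((hasDerivAt_id t).const_mul ((2 : ℝ) ^ j)).sub_const 1
  have h := ((hasDerivAt_iteratedDeriv_bump k _).comp t hin).const_mul (((2 : ℝ) ^ j) ^ k)
  rwa [show ((2 : ℝ) ^ j) ^ k * (iteratedDeriv (k + 1) bump (2 ^ j * t - 1) * 2 ^ j)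
    = scaledBumpDeriv (k + 1) j t by rw [scaledBumpDeriv]; ring] at h

theorem scaledBumpDeriv_eq_zero (k : ℕ) {j : ℕ} {s : ℝ} (h : 1/4 ≤ |2 ^ j * s - 1|) :
    scaledBumpDeriv k j s = 0 := by
  rw [scaledBumpDeriv, iteratedDeriv_bump_eq_zero k h, mul_zero]

theorem two_pow_mul_half_pow (j : ℕ) : (2 : ℝ) ^ j * (1/2) ^ j = 1 := by
  rw [← mul_pow]; norm_num

theorem scaledBumpDeriv_zero_half_pow (j : ℕ) : scaledBumpDeriv 0 j ((1/2) ^ j) = 1 := by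
  simp [scaledBumpDeriv, bump_zero]

theorem exists_eventually_forall_ne_quarter_le_abs {t : ℝ} (ht : t ≠ 0) :
    ∃ j₀ : ℕ, ∀ᶠ s in 𝓝 t, ∀ j ≠ j₀, 1/4 ≤ |2 ^ j * s - 1| := by
  rcases ht.lt_or_gt with ht | ht
  · refine ⟨0, eventually_of_mem (Iio_mem_nhds ht) fun s hs j _ => ?_⟩
    have : 2 ^ j * s < 0 := mul_neg_of_pos_of_neg (by positivity) hs
    rw [abs_of_neg (by linarith)]
    linarith
  have hex : ∃ j : ℕ, 7/10 ≤ 2 ^ j * t := by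
    obtain ⟨j, hj⟩ := pow_unbounded_of_one_lt (7/10 / t) (by norm_num : (1:ℝ) < 2)
    exact ⟨j, by rw [div_lt_iff₀ ht] at hj; linarith⟩
  classical
  -- `j₀` is the first `j` with `2ʲ t ≥ 7/10`: for `s` close to `t`, `2ʲ s < 3/4` below `j₀`
  -- and `2ʲ s ≥ 5/4` above it
  refine ⟨Nat.find hex, ?_⟩
  filter_upwards [Ioo_mem_nhds (by linarith : 25/28 * t < t) (by linarith : t < 15/14 * t)]
    with s ⟨hs₁, hs₂⟩ j hj
  have h2j : (0 : ℝ) < 2 ^ j := by positivity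
  rcases hj.lt_or_gt with hj | hj
  · have hjt : 2 ^ j * t < 7/10 := not_le.1 (Nat.find_min hex hj)
    have : 2 ^ j * s < 3/4 := by nlinarith
    rw [abs_of_neg (by linarith)]
    linarith
  · have hjt : 7/10 ≤ 2 ^ Nat.find hex * t := Nat.find_spec hex
    have hpow : 2 * 2 ^ Nat.find hex ≤ (2 : ℝ) ^ j := by
      rw [← pow_succ']; exact pow_le_pow_right₀ (by norm_num) hj
    have : 5/4 ≤ 2 ^ j * s := by nlinarith
    rw [abs_of_pos (by linarith)]
    linarith

theorem exists_forall_ne_quarter_le_abs (t : ℝ) : ∃ j₀ : ℕ, ∀ j ≠ j₀, 1/4 ≤ |2 ^ j * t - 1| := by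
  rcases eq_or_ne t 0 with rfl | ht
  · exact ⟨0, fun j _ => by norm_num⟩
  · obtain ⟨j₀, h⟩ := exists_eventually_forall_ne_quarter_le_abs ht
    exact ⟨j₀, h.self_of_nhds⟩

theorem exists_abs_scaledBumpDeriv_mul_le (k : ℕ) :
    ∃ C δ : ℝ, 0 < δ ∧ ∀ j t, t < δ → |scaledBumpDeriv k j t| * ((1/2) ^ j) ^ j ≤ C * t ^ 2 := by
  obtain ⟨M, hM⟩ := exists_abs_iteratedDeriv_bump_le k
  have hM0 : 0 ≤ M := (abs_nonneg _).trans (hM 0)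
  refine ⟨16/9 * M, 3/4 * (1/2) ^ (k + 1), by positivity, fun j t ht => ?_⟩
  by_cases hj : 1/4 ≤ |2 ^ j * t - 1|
  · rw [scaledBumpDeriv_eq_zero k hj, abs_zero, zero_mul]
    positivity
  have hjt : 3/4 < 2 ^ j * t := by
    linarith [neg_abs_le (2 ^ j * t - 1)]
  have hq := two_pow_mul_half_pow j
  have hq0 : (0 : ℝ) < (1/2) ^ j := by positivity
  -- the bump is supported near `2⁻ʲ`, so `t < δ` forces `j ≥ k + 2`
  have hkj : k + 2 ≤ j := by
    by_contra! h
    have h1 : (2 : ℝ) ^ j ≤ 2 ^ (k + 1) := pow_le_pow_right₀ (by norm_num) (by omega)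
    have h2 := two_pow_mul_half_pow (k + 1)
    have ht0 : 0 < t := pos_of_mul_pos_right (by linarith) (by positivity : (0:ℝ) ≤ 2 ^ j)
    nlinarith [mul_le_mul_of_nonneg_right h1 ht0.le]
  have hqt : (1/2) ^ j ≤ 4/3 * t := by nlinarith
  calc |scaledBumpDeriv k j t| * ((1/2) ^ j) ^ j
      ≤ (2 ^ j) ^ k * M * ((1/2) ^ j) ^ (k + 2) := by
        rw [scaledBumpDeriv, abs_mul, abs_of_pos (by positivity)]
        have hpow : ((1/2 : ℝ) ^ j) ^ j ≤ ((1/2) ^ j) ^ (k + 2) :=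
          pow_le_pow_of_le_one hq0.le (pow_le_one₀ (by norm_num) (by norm_num)) hkj
        exact mul_le_mul (mul_le_mul_of_nonneg_left (hM _) (by positivity)) hpow
          (by positivity) (by positivity)
    _ = M * ((2 ^ j * (1/2) ^ j) ^ k * ((1/2) ^ j) ^ 2) := by ring
    _ ≤ M * (4/3 * t) ^ 2 := by rw [hq, one_pow, one_mul]; gcongr
    _ = 16/9 * M * t ^ 2 := by ring

section SpecialCurve

variable {E : Type*} [AddCommGroup E] [Module ℝ E]

/-- The `k`-th derivative of `t ↦ ∑ j, bump (2ʲ t - 1) • v j`. The `j`-th summand is supported in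
`(3/4 · 2⁻ʲ, 5/4 · 2⁻ʲ)`, and these intervals are pairwise separated, so at every point at most
one summand is nonzero and near every `t ≠ 0` the sum is a single smooth term. -/
noncomputable def bumpSeries (v : ℕ → E) (k : ℕ) (t : ℝ) : E :=
  ∑ᶠ j, scaledBumpDeriv k j t • v j

theorem bumpSeries_eq_single {v : ℕ → E} {t : ℝ} {j₀ : ℕ}
    (h : ∀ j ≠ j₀, 1/4 ≤ |2 ^ j * t - 1|) (k : ℕ) :
    bumpSeries v k t = scaledBumpDeriv k j₀ t • v j₀ :=
  finsum_eq_single _ j₀ fun j hj => by rw [scaledBumpDeriv_eq_zero k (h j hj), zero_smul]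

theorem bumpSeries_apply_zero (v : ℕ → E) (k : ℕ) : bumpSeries v k 0 = 0 :=
  finsum_eq_zero_of_forall_eq_zero fun j => by
    rw [scaledBumpDeriv_eq_zero k (by norm_num), zero_smul]

theorem bumpSeries_half_pow (v : ℕ → E) (j : ℕ) : bumpSeries v 0 ((1/2) ^ j) = v j := by
  obtain ⟨j₀, h⟩ := exists_forall_ne_quarter_le_abs ((1/2 : ℝ) ^ j)
  obtain rfl : j = j₀ := by
    by_contra hj
    have := h j hj
    rw [two_pow_mul_half_pow, sub_self, abs_zero] at this
    norm_num at this
  rw [bumpSeries_eq_single h, scaledBumpDeriv_zero_half_pow, one_smul]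

theorem exists_eventually_bumpSeries_mem_smul_sq {B : Set E} (hB : Balanced ℝ B) {v : ℕ → E}
    (hv : ∀ j, v j ∈ ((1/2 : ℝ) ^ j) ^ j • B) (k : ℕ) :
    ∃ C : ℝ, ∀ᶠ t in 𝓝 0, bumpSeries v k t ∈ (C * t ^ 2) • B := by
  obtain ⟨C, δ, hδ, hC⟩ := exists_abs_scaledBumpDeriv_mul_le k
  refine ⟨C, eventually_of_mem (Iio_mem_nhds hδ) fun t ht => ?_⟩
  obtain ⟨j₀, hj₀⟩ := exists_forall_ne_quarter_le_abs t
  rw [bumpSeries_eq_single hj₀]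
  have hmem := smul_mem_smul_set (a := scaledBumpDeriv k j₀ t) (hv j₀)
  rw [smul_smul] at hmem
  refine hB.smul_mono ?_ hmem
  rw [Real.norm_eq_abs, Real.norm_eq_abs, abs_mul,
    abs_of_pos (a := ((1/2 : ℝ) ^ j₀) ^ j₀) (by positivity)]
  exact (hC j₀ t ht).trans (le_abs_self _)

variable [TopologicalSpace E] [IsTopologicalAddGroup E] [ContinuousSMul ℝ E]

theorem isSmoothCurve_bumpSeries {B : Set E} (hB : IsVonNBounded ℝ B) (hBb : Balanced ℝ B)
    {v : ℕ → E} (hv : ∀ j, v j ∈ ((1/2 : ℝ) ^ j) ^ j • B) : IsSmoothCurve (bumpSeries v 0) := by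
  refine IsSmoothCurve.of_curveDerivAt fun k t => ?_
  rcases eq_or_ne t 0 with rfl | ht
  · obtain ⟨C, hC⟩ := exists_eventually_bumpSeries_mem_smul_sq hBb hv k
    rw [bumpSeries_apply_zero]
    exact curveDerivAt_zero_of_eventually_mem_smul_sq hB hC
  · obtain ⟨j₀, hj₀⟩ := exists_eventually_forall_ne_quarter_le_abs ht
    rw [bumpSeries_eq_single hj₀.self_of_nhds]
    exact ((hasDerivAt_scaledBumpDeriv k j₀ t).curveDerivAt_smul_const (v j₀)).congr_of_eventuallyEq
      (hj₀.mono fun s hs => bumpSeries_eq_single hs k)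

theorem exists_isSmoothCurve_apply_half_pow {B : Set E} (hB : IsVonNBounded ℝ B)
    (hBb : Balanced ℝ B) {v : ℕ → E} (hv : ∀ j, v j ∈ ((1/2 : ℝ) ^ j) ^ j • B) :
    ∃ c : ℝ → E, IsSmoothCurve c ∧ c 0 = 0 ∧ ∀ j, c ((1/2) ^ j) = v j :=
  ⟨bumpSeries v 0, isSmoothCurve_bumpSeries hB hBb hv, bumpSeries_apply_zero v 0,
    bumpSeries_half_pow v⟩

theorem MackeyConvSeq.mem_of_forall_isClosed_preimage {A : Set E}
    (hA : ∀ c : ℝ → E, IsSmoothCurve c → IsClosed (c ⁻¹' A)) {y : ℕ → E} (hy : ∀ n, y n ∈ A)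
    {x : E} (hyx : MackeyConvSeq y x) : x ∈ A := by
  obtain ⟨B, ⟨-, hBb⟩, hB, μ, hμ, hyμ⟩ := hyx
  have hsub (j : ℕ) : ∃ n, |μ n| ≤ ((1/2 : ℝ) ^ j) ^ j := by
    have hr : (0 : ℝ) < ((1/2) ^ j) ^ j := by positivity
    obtain ⟨n, hn⟩ := (hμ.eventually (Metric.closedBall_mem_nhds 0 hr)).exists
    exact ⟨n, by simpa using hn⟩
  choose ρ hρ using hsub
  obtain ⟨c, hc, hc0, hcj⟩ := exists_isSmoothCurve_apply_half_pow hB hBb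
    (v := fun j => y (ρ j) - x) fun j => hBb.smul_mono (by simpa using hρ j) (hyμ (ρ j))
  have h0 : (0 : ℝ) ∈ (fun t => x + c t) ⁻¹' A :=
    (hA _ (hc.const_add x)).mem_of_tendsto
      (tendsto_pow_atTop_nhds_zero_of_lt_one (by norm_num : (0 : ℝ) ≤ 1/2) (by norm_num))
      (Eventually.of_forall fun j => by
        simpa only [mem_preimage, hcj, add_sub_cancel] using hy (ρ j))
  simpa [hc0] using h0

end SpecialCurve

theorem cInf_closed_iff_general {E : Type*} [AddCommGroup E] [Module ℝ E] [TopologicalSpace E]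
    [IsTopologicalAddGroup E] [ContinuousSMul ℝ E] [LocallyConvexSpace ℝ E] (A : Set E) :
    @IsClosed E (cInfTopology E) A ↔
      ∀ y : ℕ → E, (∀ n, y n ∈ A) → ∀ x : E, MackeyConvSeq y x → x ∈ A := by
  rw [isClosed_cInfTopology_iff]
  refine ⟨fun hA y hy x hyx => hyx.mem_of_forall_isClosed_preimage hA hy, fun H c hc => ?_⟩
  exact IsSeqClosed.isClosed fun u t hu hut => H _ hu _ (hc.mackeyConvSeq_comp hut)

theorem cInf_closed_iff {E : Type*} [AddCommGroup E] [Module ℝ E] [TopologicalSpace E]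
    [IsTopologicalAddGroup E] [ContinuousSMul ℝ E] [LocallyConvexSpace ℝ E] [T2Space E] (A : Set E) :
    @IsClosed E (cInfTopology E) A ↔
      ∀ y : ℕ → E, (∀ n, y n ∈ A) → ∀ x : E, MackeyConvSeq y x → x ∈ A :=
  cInf_closed_iff_general A
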